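/- Let d ≥ 1 and let j : (0,∞) → [0,∞) be nonincreasing. For r₀ > 0 define m₂⟨r₀⟩ := ∫_{B(0,r₀)} |x|²·(j(|x|) − ½ j(r₀)) dx and λ⟨r₀⟩ := λ(r₀) + ½ j(r₀)·vol(B(0,r₀)). Then for every r₀ > 0: (i) ½·m₂(r₀) ≤ m₂⟨r₀⟩ ≤ m₂(r₀); (ii) λ⟨r₀⟩ ≥ λ(r₀); and (iii) if in addition there is c_j > 0 with j(2r) ≥ c_j·j(r) for all r > 0, then λ⟨r₀⟩ ≤ (1 + 1/(2(2^d−1)c_j))·λ(r₀), where all quantities are read in the extended nonnegative reals. -/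

import Mathlib

open MeasureTheory Metric ENNReal

/-- Truncated second moment `m₂(r) = ∫_{B(0,r)} |x|² j(|x|) dx` in `ℝ^d`. -/
noncomputable def m2 (d : ℕ) (j : ℝ → ℝ) (r : ℝ) : ℝ≥0∞ :=
  ∫⁻ x in Metric.ball (0 : EuclideanSpace ℝ (Fin d)) r,
    ENNReal.ofReal (‖x‖ ^ 2 * j ‖x‖)

/-- Tail `λ(r) = ∫_{ℝ^d ∖ B(0,r)} j(|x|) dx` in `ℝ^d`. -/
noncomputable def tailLam (d : ℕ) (j : ℝ → ℝ) (r : ℝ) : ℝ≥0∞ :=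
  ∫⁻ x in (Metric.ball (0 : EuclideanSpace ℝ (Fin d)) r)ᶜ,
    ENNReal.ofReal (j ‖x‖)

/-- Second moment of the small part of the small/flat decomposition:
`m₂⟨r₀⟩ = ∫_{B(0,r₀)} |x|²·(j(|x|) − ½ j(r₀)) dx`. -/
noncomputable def m2Flat (d : ℕ) (j : ℝ → ℝ) (r₀ : ℝ) : ℝ≥0∞ :=
  ∫⁻ x in Metric.ball (0 : EuclideanSpace ℝ (Fin d)) r₀,
    ENNReal.ofReal (‖x‖ ^ 2 * (j ‖x‖ - j r₀ / 2))

/-- Total mass of the flat part of the small/flat decomposition: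
`λ⟨r₀⟩ = λ(r₀) + ½ j(r₀)·vol(B(0,r₀))`. -/
noncomputable def lamFlat (d : ℕ) (j : ℝ → ℝ) (r₀ : ℝ) : ℝ≥0∞ :=
  tailLam d j r₀ +
    ENNReal.ofReal (j r₀ / 2) * volume (Metric.ball (0 : EuclideanSpace ℝ (Fin d)) r₀)

/-!
On `B(0, r₀)` monotonicity gives `j(|x|) ≥ j(r₀)`, hence `½ j(|x|) ≤ j(|x|) − ½ j(r₀) ≤ j(|x|)`,
which is (i). For (iii), the annulus `B(0, 2r₀) ∖ B(0, r₀)` has volume `(2^d − 1)·|B(0, r₀)|` and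
carries `j ≥ j(2r₀) ≥ c_j j(r₀)`, so `λ(r₀) ≥ (2^d − 1) c_j j(r₀) |B(0, r₀)|`, which bounds the
extra flat mass `½ j(r₀) |B(0, r₀)|`.
-/

theorem MeasureTheory.Measure.addHaar_ball_two_mul_sdiff_ball {E : Type*} [NormedAddCommGroup E]
    [NormedSpace ℝ E] [MeasurableSpace E] [BorelSpace E] [FiniteDimensional ℝ E]
    (μ : Measure E) [μ.IsAddHaarMeasure] (x : E) {r : ℝ} (hr : 0 ≤ r) :
    μ (ball x (2 * r) \ ball x r) = (2 ^ Module.finrank ℝ E - 1) * μ (ball x r) := by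
  rw [measure_sdiff (ball_subset_ball (by linarith)) measurableSet_ball.nullMeasurableSet
      measure_ball_lt_top.ne, Measure.addHaar_ball_mul_of_pos μ x two_pos,
    ← Measure.addHaar_ball_center μ x, ENNReal.sub_mul fun _ _ => measure_ball_lt_top.ne,
    one_mul, ENNReal.ofReal_pow zero_le_two, ENNReal.ofReal_ofNat]

section SmallFlatDecomposition

variable {d : ℕ} {j : ℝ → ℝ} {r₀ : ℝ}

theorem m2_le_two_mul_m2Flat (hmono : AntitoneOn j (Set.Ioi 0)) :
    m2 d j r₀ ≤ 2 * m2Flat d j r₀ := by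
  rw [m2, m2Flat, ← lintegral_const_mul' 2 _ ENNReal.ofNat_ne_top]
  refine setLIntegral_mono' measurableSet_ball fun x hx => ?_
  rw [mem_ball_zero_iff] at hx
  rcases (norm_nonneg x).eq_or_lt with hx0 | hx0
  · simp [← hx0]
  have hj : j r₀ ≤ j ‖x‖ := hmono hx0 (hx0.trans hx) hx.le
  calc ENNReal.ofReal (‖x‖ ^ 2 * j ‖x‖)
      ≤ ENNReal.ofReal (2 * (‖x‖ ^ 2 * (j ‖x‖ - j r₀ / 2))) :=
        ENNReal.ofReal_le_ofReal (by nlinarith [sq_nonneg ‖x‖])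
    _ = 2 * ENNReal.ofReal (‖x‖ ^ 2 * (j ‖x‖ - j r₀ / 2)) := by
        rw [ENNReal.ofReal_mul zero_le_two, ENNReal.ofReal_ofNat]

theorem m2Flat_le_m2 (hj : 0 ≤ j r₀) : m2Flat d j r₀ ≤ m2 d j r₀ :=
  lintegral_mono fun x => ENNReal.ofReal_le_ofReal <|
    mul_le_mul_of_nonneg_left (by linarith) (sq_nonneg _)

theorem ofReal_mul_volume_annulus_le_tailLam (hmono : AntitoneOn j (Set.Ioi 0)) (hr₀ : 0 < r₀) :
    ENNReal.ofReal (j (2 * r₀)) *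
        volume (ball (0 : EuclideanSpace ℝ (Fin d)) (2 * r₀) \ ball 0 r₀) ≤ tailLam d j r₀ := by
  rw [← setLIntegral_const]
  refine (setLIntegral_mono' (measurableSet_ball.diff measurableSet_ball) fun x hx => ?_).trans
    (lintegral_mono_set fun x hx => hx.2)
  simp only [Set.mem_sdiff, mem_ball_zero_iff, not_lt] at hx
  exact ENNReal.ofReal_le_ofReal (hmono (hr₀.trans_le hx.2) (by simp; linarith) hx.1.le)

theorem lamFlat_le_of_doubling (hd : 1 ≤ d) (hmono : AntitoneOn j (Set.Ioi 0)) (hr₀ : 0 < r₀)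
    {cj : ℝ} (hcj : 0 < cj) (hdbl : cj * j r₀ ≤ j (2 * r₀)) :
    lamFlat d j r₀ ≤ ENNReal.ofReal (1 + 1 / (2 * ((2 : ℝ) ^ d - 1) * cj)) * tailLam d j r₀ := by
  set V := volume (ball (0 : EuclideanSpace ℝ (Fin d)) r₀)
  set K : ℝ := ((2 : ℝ) ^ d - 1) * cj with hK_def
  have hP : (0 : ℝ) < 2 ^ d - 1 :=
    sub_pos.2 (one_lt_pow₀ _root_.one_lt_two (Nat.one_le_iff_ne_zero.1 hd))
  have hK : 0 < K := _root_.mul_pos hP hcj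
  have hannulus := ofReal_mul_volume_annulus_le_tailLam (d := d) hmono hr₀
  rw [Measure.addHaar_ball_two_mul_sdiff_ball _ _ hr₀.le, finrank_euclideanSpace_fin] at hannulus
  have hflat : ENNReal.ofReal (j r₀ / 2) * V ≤ ENNReal.ofReal (1 / (2 * K)) * tailLam d j r₀ :=
    calc ENNReal.ofReal (j r₀ / 2) * V
        = ENNReal.ofReal (1 / (2 * K)) * ENNReal.ofReal (((2 : ℝ) ^ d - 1) * (cj * j r₀)) * V := by
          rw [← ENNReal.ofReal_mul (by positivity)]
          congr 2
          field_simp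
          ring
      _ ≤ ENNReal.ofReal (1 / (2 * K)) * (ENNReal.ofReal (j (2 * r₀)) * ((2 ^ d - 1) * V)) := by
          rw [ENNReal.ofReal_mul hP.le, ENNReal.ofReal_sub _ zero_le_one,
            ENNReal.ofReal_pow zero_le_two, ENNReal.ofReal_ofNat, ENNReal.ofReal_one,
            mul_assoc, mul_assoc, mul_left_comm _ _ V]
          gcongr
      _ ≤ ENNReal.ofReal (1 / (2 * K)) * tailLam d j r₀ := by gcongr
  calc lamFlat d j r₀ ≤ tailLam d j r₀ + ENNReal.ofReal (1 / (2 * K)) * tailLam d j r₀ :=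
        add_le_add_right hflat _
    _ = ENNReal.ofReal (1 + 1 / (2 * ((2 : ℝ) ^ d - 1) * cj)) * tailLam d j r₀ := by
        rw [mul_assoc 2, ← hK_def, ENNReal.ofReal_add zero_le_one (by positivity), add_mul,
          ENNReal.ofReal_one, one_mul]

end SmallFlatDecomposition

theorem stmt10 (d : ℕ) (hd : 1 ≤ d) (j : ℝ → ℝ)
    (hnonneg : ∀ r : ℝ, 0 < r → 0 ≤ j r)
    (hmono : AntitoneOn j (Set.Ioi (0 : ℝ)))
    (r₀ : ℝ) (hr₀ : 0 < r₀) :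
    (m2 d j r₀ / 2 ≤ m2Flat d j r₀ ∧ m2Flat d j r₀ ≤ m2 d j r₀) ∧
    tailLam d j r₀ ≤ lamFlat d j r₀ ∧
    (∀ cj : ℝ, 0 < cj → (∀ r : ℝ, 0 < r → cj * j r ≤ j (2 * r)) →
      lamFlat d j r₀ ≤
        ENNReal.ofReal (1 + 1 / (2 * ((2 : ℝ) ^ d - 1) * cj)) * tailLam d j r₀) := by
  refine ⟨⟨ENNReal.div_le_of_le_mul' (m2_le_two_mul_m2Flat hmono), m2Flat_le_m2 (hnonneg r₀ hr₀)⟩,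
    le_self_add, fun cj hcj hdbl => lamFlat_le_of_doubling hd hmono hr₀ hcj (hdbl r₀ hr₀)⟩
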